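/- Let g be a Leibniz algebra over a field K and let 𝔞𝔡 = (ad_L, id) : g → ol(g) be the adjoint naive representation, 𝔞𝔡(x) = ([x,·], x). For a k-multilinear map 𝔣 : g^k → g define the k-cochain f : g^k → End(g) ⊕ g by f(x₁,…,x_k) = (ad_L(𝔣(x₁,…,x_k)), 𝔣(x₁,…,x_k)). Then the naive coboundary δf, defined by δf(x₁,…,x_{k+1}) = Σ_{i=1}^{k}(−1)^{i+1} ⟦𝔞𝔡(x_i), f(x₁,…,x̂_i,…,x_{k+1})⟧ + (−1)^{k+1} ⟦f(x₁,…,x_k), 𝔞𝔡(x_{k+1})⟧ + Σ_{1≤i<j≤k+1}(−1)^{i} f(x₁,…,x̂_i,…,x_{j−1},[x_i,x_j],x_{j+1},…,x_{k+1}), satisfies δf(x₁,…,x_{k+1}) = (ad_L(∂𝔣(x₁,…,x_{k+1})), ∂𝔣(x₁,…,x_{k+1})), where ∂ is the Leibniz coboundary of 𝔣 with respect to the adjoint representation (g, ad_L, ad_R) with ad_L(x)(y) = [x,y] and ad_R(x)(y) = [y,x]. -/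
import Mathlib


/-- The omni-Lie bracket `⟦(A,u),(B,v)⟧ = (A∘B − B∘A, A v)` on `End(V) ⊕ V`. -/
def omniBracket {K : Type*} [Field K] {V : Type*} [AddCommGroup V] [Module K V]
    (e₁ e₂ : Module.End K V × V) : Module.End K V × V :=
  (e₁.1 * e₂.1 - e₂.1 * e₁.1, e₁.1 e₂.2)

/-- The Leibniz coboundary operator of a representation `(V,l,r)` (0-indexed). -/
def leibnizCoboundary {K : Type*} [Field K] {g V : Type*} [AddCommGroup g] [Module K g]
    [AddCommGroup V] [Module K V]
    (b : g →ₗ[K] g →ₗ[K] g) (l r : g →ₗ[K] Module.End K V)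
    {k : ℕ} (c : (Fin k → g) → V) : (Fin (k + 1) → g) → V := fun x =>
  (∑ p : Fin k, ((-1 : ℤ) ^ (p : ℕ)) • l (x p.castSucc) (c (x ∘ p.castSucc.succAbove)))
    + ((-1 : ℤ) ^ (k + 1)) • r (x (Fin.last k)) (c (x ∘ Fin.castSucc))
    + ∑ p : Fin (k + 1), ∑ q : Fin (k + 1),
        if h : p < q then
          ((-1 : ℤ) ^ ((p : ℕ) + 1)) •
            c (Function.update (x ∘ p.succAbove)
                (q.pred (Fin.pos_iff_ne_zero.mp (lt_of_le_of_lt (Fin.zero_le p) h)))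
                (b (x p) (x q)))
        else 0

/-- The naive coboundary operator of a naive representation `ρ : g → ol(V)`
(0-indexed): brackets with `ρ(x_i)` replace the left/right actions. -/
def naiveCoboundary {K : Type*} [Field K] {g V : Type*} [AddCommGroup g] [Module K g]
    [AddCommGroup V] [Module K V]
    (b : g →ₗ[K] g →ₗ[K] g) (ρ : g → Module.End K V × V)
    {k : ℕ} (f : (Fin k → g) → Module.End K V × V) :
    (Fin (k + 1) → g) → Module.End K V × V := fun x =>
  (∑ p : Fin k, ((-1 : ℤ) ^ (p : ℕ)) •
      omniBracket (ρ (x p.castSucc)) (f (x ∘ p.castSucc.succAbove)))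
    + ((-1 : ℤ) ^ (k + 1)) • omniBracket (f (x ∘ Fin.castSucc)) (ρ (x (Fin.last k)))
    + ∑ p : Fin (k + 1), ∑ q : Fin (k + 1),
        if h : p < q then
          ((-1 : ℤ) ^ ((p : ℕ) + 1)) •
            f (Function.update (x ∘ p.succAbove)
                (q.pred (Fin.pos_iff_ne_zero.mp (lt_of_le_of_lt (Fin.zero_le p) h)))
                (b (x p) (x q)))
        else 0

/-- for the adjoint naive representation `𝔞𝔡 = (ad_L, id) : g → ol(g)`
and a `k`-multilinear map `𝔣 : g^k → g`, the naive coboundary of the cochain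
`f = (ad_L∘𝔣, 𝔣)` is `δf = (ad_L(∂𝔣), ∂𝔣)`, where `∂` is the Leibniz coboundary with
respect to the adjoint representation `(g, ad_L, ad_R)`. -/
theorem naive_coboundary_adjoint
    {K : Type*} [Field K] {g : Type*} [AddCommGroup g] [Module K g]
    (b : g →ₗ[K] g →ₗ[K] g)
    (leib : ∀ x y z : g, b x (b y z) = b (b x y) z + b y (b x z))
    {k : ℕ} (𝔣 : MultilinearMap K (fun _ : Fin k => g) g) :
    ∀ x : Fin (k + 1) → g,
      naiveCoboundary b (fun y => ((b y : Module.End K g), y))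
          (fun ys => ((b (𝔣 ys) : Module.End K g), 𝔣 ys)) x =
        ((b (leibnizCoboundary b b b.flip (⇑𝔣) x) : Module.End K g),
          leibnizCoboundary b b b.flip (⇑𝔣) x) := by
  intro x
  have key : ∀ u v : g, (b (b u v) : Module.End K g) =
      (b u : Module.End K g) * (b v : Module.End K g)
        - (b v : Module.End K g) * (b u : Module.End K g) := by
    intro u v
    ext z
    have h := leib u v z
    rw [LinearMap.sub_apply, Module.End.mul_apply, Module.End.mul_apply, h]
    abel
  simp only [naiveCoboundary, leibnizCoboundary, omniBracket]
  refine Prod.ext ?_ ?_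
  · simp only [map_add, map_sum, map_zsmul, Prod.fst_add, Prod.fst_sum, Prod.smul_fst,
      apply_dite (⇑b), apply_dite Prod.fst, map_zero, Prod.fst_zero, LinearMap.flip_apply,
      key]
  · simp only [Prod.snd_add, Prod.snd_sum, Prod.smul_snd, apply_dite Prod.snd,
      Prod.snd_zero, LinearMap.flip_apply]
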